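/- The Euler–Lagrange operator of the quasicentral variational problem vanishes on the complement of the saturated condenser: if X minimizes I over C_{PQ} and P_1, Q_1 are the projections with P ≤ P_1, Q ≤ Q_1, P_1 Q_1 = 0, X P_1 = P_1, X Q_1 = 0, furnished by the structure theorem, then (I − P_1 − Q_1) Θ (I − P_1 − Q_1) = 0, where Θ = Σ_k [T_k, [X,T_k] D^{p/2−1} + D^{p/2−1} [X,T_k]] with D = −Σ_j [X,T_j]². -/
import Mathlib


open Filter ContinuousLinearMap
open scoped ENNReal

variable {H : Type} [NormedAddCommGroup H] [InnerProductSpace ℂ H] [CompleteSpace H]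

/-- A finite rank operator between Hilbert spaces. -/
def FinRank' {K' : Type} [NormedAddCommGroup K'] [NormedSpace ℂ K'] (A : H →L[ℂ] K') : Prop :=
  FiniteDimensional ℂ (LinearMap.range A.toLinearMap)

/-- The `j`-th singular value (approximation number) of an operator. -/
noncomputable def sv' {K' : Type} [NormedAddCommGroup K'] [NormedSpace ℂ K']
    (T : H →L[ℂ] K') (j : ℕ) : ℝ :=
  sInf {r | ∃ F : H →L[ℂ] K', FinRank' F ∧
    Module.finrank ℂ (LinearMap.range F.toLinearMap) ≤ j ∧ r = ‖T - F‖}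

/-- The column operator `([T_1,A],…,[T_n,A])ᵀ : H → H^n` (with the `ℓ²` norm on `H^n`). -/
noncomputable def colComm {n : ℕ} (τ : Fin n → H →L[ℂ] H) (A : H →L[ℂ] H) :
    H →L[ℂ] PiLp 2 (fun _ : Fin n => H) :=
  ((PiLp.continuousLinearEquiv 2 ℂ (fun _ : Fin n => H)).symm :
      (∀ _ : Fin n, H) →L[ℂ] PiLp 2 (fun _ : Fin n => H)).comp
    (ContinuousLinearMap.pi fun j => τ j * A - A * τ j)

/-- `I(A)`: the `p`-th power of the Schatten `p`-norm of the column of commutators. -/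
noncomputable def Ifun (p : ℝ) {n : ℕ} (τ : Fin n → H →L[ℂ] H) (A : H →L[ℂ] H) : ℝ≥0∞ :=
  ∑' j : ℕ, ENNReal.ofReal (sv' (colComm τ A) j) ^ p

/-- The Schatten `p`-norm of an operator on `H`. -/
noncomputable def schattenNu (p : ℝ) (X : H →L[ℂ] H) : ℝ≥0∞ :=
  (∑' j : ℕ, ENNReal.ofReal (sv' X j) ^ p) ^ (1 / p)

/-- The quasicentral modulus `k_p(τ)` relative to the Schatten `p`-class. -/
noncomputable def kSchatten (p : ℝ) {n : ℕ} (τ : Fin n → H →L[ℂ] H) : ℝ≥0∞ :=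
  sInf {C | ∃ A : ℕ → H →L[ℂ] H,
    ((∀ m, FinRank' (A m) ∧ 0 ≤ A m ∧ A m ≤ 1) ∧ Monotone A ∧
      ∀ x : H, Tendsto (fun m => A m x) atTop (nhds x)) ∧
    Tendsto (fun m => ⨆ j, schattenNu p (A m * τ j - τ j * A m)) atTop (nhds C)}

/-- An orthogonal projection. -/
def IsProj' (P : H →L[ℂ] H) : Prop := IsSelfAdjoint P ∧ P * P = P

/-- The admissible set `C_{PQ}` of the condenser variational problem. -/
def Cfull (P Q : H →L[ℂ] H) : Set (H →L[ℂ] H) :=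
  {B | 0 ≤ B ∧ B ≤ 1 ∧ B * P = P ∧ B * Q = 0}

/-- The finite rank admissible set `C⁰_{PQ}`. -/
def Czero (P Q : H →L[ℂ] H) : Set (H →L[ℂ] H) :=
  {A | FinRank' A ∧ 0 ≤ A ∧ A ≤ 1 ∧ A * P = P ∧ A * Q = 0}

/-- `D = -Σ_j [X,T_j]²`. -/
noncomputable def Dop {n : ℕ} (τ : Fin n → H →L[ℂ] H) (X : H →L[ℂ] H) : H →L[ℂ] H :=
  -∑ j : Fin n, (X * τ j - τ j * X) * (X * τ j - τ j * X)

/-- The Euler–Lagrange operator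
`Θ = Σ_k [T_k, [X,T_k] D^{p/2-1} + D^{p/2-1} [X,T_k]]`, with `D^{p/2-1}` given by the
continuous functional calculus. -/
noncomputable def Theta (p : ℝ) {n : ℕ} (τ : Fin n → H →L[ℂ] H) (X : H →L[ℂ] H) :
    H →L[ℂ] H :=
  ∑ k : Fin n,
    (τ k * ((X * τ k - τ k * X) * cfc (fun t : ℝ => t ^ (p / 2 - 1)) (Dop τ X) +
        cfc (fun t : ℝ => t ^ (p / 2 - 1)) (Dop τ X) * (X * τ k - τ k * X)) -
      ((X * τ k - τ k * X) * cfc (fun t : ℝ => t ^ (p / 2 - 1)) (Dop τ X) +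
        cfc (fun t : ℝ => t ^ (p / 2 - 1)) (Dop τ X) * (X * τ k - τ k * X)) * τ k)

/-- If `X` minimizes `I` over `C_{PQ}` and `P₁, Q₁` are the saturated projections
furnished by the structure theorem (so that `(1-P-Q₁)Θ(1-P-Q₁) ≤ 0` and
`(1-P₁-Q)Θ(1-P₁-Q) ≥ 0`), then the Euler–Lagrange operator vanishes on the complement
of the saturated condenser: `(1-P₁-Q₁)Θ(1-P₁-Q₁) = 0`. -/
theorem euler_lagrange_vanishes (p : ℝ) (hp : 2 ≤ p) {n : ℕ}
    (τ : Fin n → H →L[ℂ] H) (hsa : ∀ j, IsSelfAdjoint (τ j))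
    (P Q : H →L[ℂ] H) (hP : IsProj' P) (hQ : IsProj' Q)
    (hPfin : FinRank' P) (hQfin : FinRank' Q) (hPQ : P * Q = 0)
    (X : H →L[ℂ] H) (hX : X ∈ Cfull P Q)
    (hmin : Ifun p τ X = sInf {c | ∃ B ∈ Cfull P Q, c = Ifun p τ B})
    (P₁ Q₁ : H →L[ℂ] H) (hP₁ : IsProj' P₁) (hQ₁ : IsProj' Q₁)
    (hPP₁ : P₁ * P = P) (hQQ₁ : Q₁ * Q = Q) (hP₁Q₁ : P₁ * Q₁ = 0)
    (hXP₁ : X * P₁ = P₁) (hXQ₁ : X * Q₁ = 0)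
    (hneg : (1 - P - Q₁) * Theta p τ X * (1 - P - Q₁) ≤ 0)
    (hpos : 0 ≤ (1 - P₁ - Q) * Theta p τ X * (1 - P₁ - Q)) :
    (1 - P₁ - Q₁) * Theta p τ X * (1 - P₁ - Q₁) = 0 := by
  set Θ := Theta p τ X with hΘ
  have hPsa := hP.1; have hQsa := hQ.1
  have hP₁sa := hP₁.1; have hQ₁sa := hQ₁.1
  have hPP₁' : P * P₁ = P := by
    have := congrArg star hPP₁
    simpa [star_mul, hP₁sa.star_eq, hPsa.star_eq] using this
  have hQQ₁' : Q * Q₁ = Q := by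
    have := congrArg star hQQ₁
    simpa [star_mul, hQ₁sa.star_eq, hQsa.star_eq] using this
  have hQ₁P₁ : Q₁ * P₁ = 0 := by
    have := congrArg star hP₁Q₁
    simpa [star_mul, hP₁sa.star_eq, hQ₁sa.star_eq] using this
  have hPQ₁ : P * Q₁ = 0 := by rw [← hPP₁', mul_assoc, hP₁Q₁, mul_zero]
  have hQ₁P : Q₁ * P = 0 := by
    have := congrArg star hPQ₁
    simpa [star_mul, hPsa.star_eq, hQ₁sa.star_eq] using this
  have hP₁Q : P₁ * Q = 0 := by rw [← hQQ₁, ← mul_assoc, hP₁Q₁, zero_mul]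
  have hQP₁ : Q * P₁ = 0 := by
    have := congrArg star hP₁Q
    simpa [star_mul, hPsa.star_eq, hP₁sa.star_eq, hQsa.star_eq] using this
  set E : H →L[ℂ] H := 1 - P₁ - Q₁ with hE
  set F : H →L[ℂ] H := 1 - P - Q₁ with hF
  set G : H →L[ℂ] H := 1 - P₁ - Q with hG
  have hEsa : IsSelfAdjoint E := by
    rw [hE]; exact ((IsSelfAdjoint.one (H →L[ℂ] H)).sub hP₁sa).sub hQ₁sa
  have hEF : E * F = E := by
    rw [hE, hF]
    simp only [mul_sub, sub_mul, mul_one, one_mul, hP₁.2, hQ₁.2, hP₁Q₁, hQ₁P₁,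
      hPP₁', hQQ₁', hPQ₁, hQ₁P, hP₁Q, hQP₁, hPP₁, hQQ₁]
    abel
  have hFE : F * E = E := by
    have := congrArg star hEF
    simpa [star_mul, hEsa.star_eq, hF, star_sub, hPsa.star_eq, hQ₁sa.star_eq] using this
  have hEG : E * G = E := by
    rw [hE, hG]
    simp only [mul_sub, sub_mul, mul_one, one_mul, hP₁.2, hQ₁.2, hP₁Q₁, hQ₁P₁,
      hPP₁', hQQ₁', hPQ₁, hQ₁P, hP₁Q, hQP₁, hPP₁, hQQ₁]
    abel
  have hGE : G * E = E := by
    have := congrArg star hEG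
    simpa [star_mul, hEsa.star_eq, hG, star_sub, hP₁sa.star_eq, hQsa.star_eq] using this
  have hle : E * Θ * E ≤ 0 := by
    have h1 : (0 : H →L[ℂ] H) ≤ -(F * Θ * F) := neg_nonneg.mpr hneg
    have h2 : (0 : H →L[ℂ] H) ≤ star E * (-(F * Θ * F)) * E := star_left_conjugate_nonneg h1 E
    rw [hEsa.star_eq] at h2
    have h3 : E * -(F * Θ * F) * E = -(E * Θ * E) := by
      rw [mul_neg, neg_mul]
      congr 1
      calc E * (F * Θ * F) * E = (E * F) * Θ * (F * E) := by noncomm_ring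
        _ = E * Θ * E := by rw [hEF, hFE]
    rw [h3] at h2
    exact neg_nonneg.mp h2
  have hge : 0 ≤ E * Θ * E := by
    have h2 : (0 : H →L[ℂ] H) ≤ star E * ((1 - P₁ - Q) * Θ * (1 - P₁ - Q)) * E :=
      star_left_conjugate_nonneg hpos E
    rw [hEsa.star_eq] at h2
    have h3 : E * (G * Θ * G) * E = E * Θ * E := by
      calc E * (G * Θ * G) * E = (E * G) * Θ * (G * E) := by noncomm_ring
        _ = E * Θ * E := by rw [hEG, hGE]
    rw [← hG, h3] at h2
    exact h2
  exact le_antisymm hle hge
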